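/- arXiv:1807.11117 — 2 statements merged into one kernel-verified Lean document; each statement's English description precedes it below -/
import Mathlib

section
/- For every real x and every y > 0 one has the strict inequality Φ̄(x−y) > e^{2xy}·Φ̄(x+y); that is, f(x,y) > 0 whenever y > 0. -/
open Real Filter MeasureTheory

/-- Standard normal density. -/
noncomputable def stdPhi (u : ℝ) : ℝ := (Real.sqrt (2 * Real.pi))⁻¹ * Real.exp (-u ^ 2 / 2)

/-- Standard normal distribution function. -/
noncomputable def stdCdf (u : ℝ) : ℝ := ∫ s in Set.Iic u, stdPhi s

/-- Standard normal survivor function. -/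
noncomputable def stdSurv (u : ℝ) : ℝ := 1 - stdCdf u

noncomputable def fFun (x y : ℝ) : ℝ := stdSurv (x - y) - Real.exp (2 * x * y) * stdSurv (x + y)

noncomputable def gFun (x y : ℝ) : ℝ := 1 - x * stdSurv (x + y) / stdPhi (x + y)

lemma neg_half_sq (u : ℝ) : -(1/2 : ℝ) * u ^ 2 = -u ^ 2 / 2 := by ring

lemma stdPhi_integrable : Integrable stdPhi := by
  have h : Integrable fun u : ℝ => (Real.sqrt (2 * Real.pi))⁻¹ * Real.exp (-(1/2 : ℝ) * u ^ 2) :=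
    (integrable_exp_neg_mul_sq (by norm_num)).const_mul _
  simp_rw [neg_half_sq] at h
  exact h

lemma stdPhi_pos (u : ℝ) : 0 < stdPhi u := by
  have : 0 < Real.sqrt (2 * Real.pi) :=
    Real.sqrt_pos.2 (by positivity)
  exact mul_pos (inv_pos.2 this) (Real.exp_pos _)

lemma integral_stdPhi : ∫ u : ℝ, stdPhi u = 1 := by
  have h : ∫ u : ℝ, Real.exp (-(1/2 : ℝ) * u ^ 2) = Real.sqrt (Real.pi / (1/2)) :=
    integral_gaussian (1/2)
  unfold stdPhi
  simp_rw [← neg_half_sq]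
  rw [integral_const_mul, h]
  rw [show Real.pi / (1/2) = 2 * Real.pi by ring]
  rw [inv_mul_cancel₀]
  exact ne_of_gt (Real.sqrt_pos.2 (by positivity))

lemma stdSurv_eq (u : ℝ) : stdSurv u = ∫ s in Set.Ioi u, stdPhi s := by
  have := intervalIntegral.integral_Iic_add_Ioi (b := u) (f := stdPhi) (μ := volume)
    stdPhi_integrable.integrableOn stdPhi_integrable.integrableOn
  rw [integral_stdPhi] at this
  unfold stdSurv stdCdf
  linarith

/-- Strict positivity of f for y > 0: Φ̄(x−y) > e^{2xy}·Φ̄(x+y). -/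
theorem fFun_pos (x y : ℝ) (hy : 0 < y) :
    Real.exp (2 * x * y) * stdSurv (x + y) < stdSurv (x - y) := by
  rw [stdSurv_eq, stdSurv_eq, ← integral_const_mul]
  -- substitute in the left integral
  have hsub : ∫ s in Set.Ioi (x + y), Real.exp (2 * x * y) * stdPhi s
      = ∫ t in Set.Ioi (x - y), Real.exp (2 * x * y) * stdPhi (t + 2 * y) := by
    have hpre : (fun t : ℝ => t + 2 * y) ⁻¹' Set.Ioi (x + y) = Set.Ioi (x - y) := by
      ext t; simp only [Set.mem_preimage, Set.mem_Ioi]; constructor <;> intro h <;> linarith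
    have := (measurePreserving_add_right (volume : Measure ℝ) (2 * y)).setIntegral_preimage_emb
      (measurableEmbedding_addRight (2 * y))
      (fun s => Real.exp (2 * x * y) * stdPhi s) (Set.Ioi (x + y))
    rw [hpre] at this
    exact this.symm
  rw [hsub]
  -- pointwise strict inequality on Ioi (x - y)
  have hlt : ∀ t ∈ Set.Ioi (x - y),
      Real.exp (2 * x * y) * stdPhi (t + 2 * y) < stdPhi t := by
    intro t ht
    simp only [Set.mem_Ioi] at ht
    unfold stdPhi
    rw [mul_comm (Real.exp (2 * x * y)), mul_assoc, ← Real.exp_add]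
    have hs : 0 < (Real.sqrt (2 * Real.pi))⁻¹ :=
      inv_pos.2 (Real.sqrt_pos.2 (by positivity))
    refine mul_lt_mul_of_pos_left ?_ hs
    apply Real.exp_lt_exp.2
    nlinarith
  -- integrability
  have hint1 : IntegrableOn stdPhi (Set.Ioi (x - y)) := stdPhi_integrable.integrableOn
  have hint2 : IntegrableOn (fun t => Real.exp (2 * x * y) * stdPhi (t + 2 * y))
      (Set.Ioi (x - y)) :=
    ((stdPhi_integrable.comp_add_right (2 * y)).const_mul _).integrableOn
  have hdiff : 0 < ∫ t in Set.Ioi (x - y),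
      (stdPhi t - Real.exp (2 * x * y) * stdPhi (t + 2 * y)) := by
    rw [setIntegral_pos_iff_support_of_nonneg_ae]
    · have hsup : Set.Ioi (x - y) ⊆ Function.support
          (fun t => stdPhi t - Real.exp (2 * x * y) * stdPhi (t + 2 * y)) := by
        intro t ht
        exact ne_of_gt (sub_pos.2 (hlt t ht))
      calc (0 : ENNReal) < volume (Set.Ioi (x - y)) := by
              simp [Real.volume_Ioi]
        _ ≤ volume (Function.support
              (fun t => stdPhi t - Real.exp (2 * x * y) * stdPhi (t + 2 * y))
                ∩ Set.Ioi (x - y)) := by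
              rw [Set.inter_eq_right.2 hsup]
    · filter_upwards [ae_restrict_mem measurableSet_Ioi] with t ht
      exact le_of_lt (sub_pos.2 (hlt t ht))
    · exact hint1.sub hint2
  have := MeasureTheory.integral_sub hint1 hint2
  rw [this] at hdiff
  linarith
end

section
/- Let σ > 0 and let Z be a real random variable whose law is the centered Gaussian measure on ℝ with variance σ². Then there exists a constant c > 0 such that for every h ∈ (0,1] and every t ≥ 1, E[h·B·e^{−2hB}·Φ̄(B/√t − h·√t)] ≥ c·h, where B = max(Z + h, 0)/σ². -/
open Real Filter MeasureTheory

/-!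
Restrict the expectation to the event `σ² < Z < 2σ²`, which has positive Gaussian probability.
There `B ∈ [1, M]` with `M = 2 + σ⁻²` for every `h ∈ (0, 1]`, and since `t ≥ 1` the argument of
`Φ̄` is at most `B ≤ M`; hence the integrand is at least `h e^{-2M} Φ̄(M)` on the event, uniformly
in `t`. Off the event the integrand is nonnegative, and it is bounded by `e⁻¹`, hence integrable.
-/

open ProbabilityTheory

lemma stdPhi_eq_gaussianPDFReal : stdPhi = gaussianPDFReal 0 1 := by
  ext u
  simp [stdPhi, gaussianPDFReal]

lemma stdSurv_eq_measureReal_Ioi (u : ℝ) : stdSurv u = (gaussianReal 0 1).real (Set.Ioi u) := by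
  rw [stdSurv, stdCdf, ← Set.compl_Iic, probReal_compl_eq_one_sub measurableSet_Iic,
    measureReal_def, gaussianReal_apply_eq_integral 0 one_ne_zero,
    ENNReal.toReal_ofReal
      (setIntegral_nonneg measurableSet_Iic fun x _ => gaussianPDFReal_nonneg 0 1 x),
    stdPhi_eq_gaussianPDFReal]

lemma gaussianReal_real_pos (m : ℝ) {v : NNReal} (hv : v ≠ 0) {s : Set ℝ} (hs : volume s ≠ 0) :
    0 < (gaussianReal m v).real s :=
  ENNReal.toReal_pos (fun h => hs (gaussianReal_absolutelyContinuous' m hv h)) (measure_ne_top _ _)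

lemma stdSurv_pos (u : ℝ) : 0 < stdSurv u := by
  rw [stdSurv_eq_measureReal_Ioi]
  exact gaussianReal_real_pos 0 one_ne_zero (by simp)

lemma stdSurv_le_one (u : ℝ) : stdSurv u ≤ 1 := by
  rw [stdSurv_eq_measureReal_Ioi]
  exact measureReal_le_one

lemma stdSurv_antitone : Antitone stdSurv := fun a b hab => by
  simp only [stdSurv_eq_measureReal_Ioi]
  exact measureReal_mono (Set.Ioi_subset_Ioi hab)

@[fun_prop]
lemma measurable_stdSurv : Measurable stdSurv := stdSurv_antitone.measurable

noncomputable def survWeight (h t B : ℝ) : ℝ :=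
  h * B * exp (-(2 * h * B)) * stdSurv (B / √t - h * √t)

lemma survWeight_nonneg {h B : ℝ} (hhB : 0 ≤ h * B) (t : ℝ) : 0 ≤ survWeight h t B :=
  mul_nonneg (mul_nonneg hhB (exp_pos _).le) (stdSurv_pos _).le

lemma survWeight_le {h B : ℝ} (hhB : 0 ≤ h * B) (t : ℝ) : survWeight h t B ≤ exp (-1) := by
  have hx : h * B * exp (-(2 * h * B)) ≤ exp (-1) := by
    have := mul_exp_neg_le_exp_neg_one (2 * h * B)
    nlinarith [exp_pos (-(2 * h * B))]
  calc survWeight h t B ≤ h * B * exp (-(2 * h * B)) * 1 :=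
        mul_le_mul_of_nonneg_left (stdSurv_le_one _) (mul_nonneg hhB (exp_pos _).le)
    _ ≤ exp (-1) := by rwa [mul_one]

lemma measurable_survWeight (h t : ℝ) : Measurable (survWeight h t) := by
  unfold survWeight; fun_prop

lemma mul_exp_mul_stdSurv_le_survWeight {h t B M : ℝ} (hh0 : 0 ≤ h) (hh1 : h ≤ 1) (ht : 1 ≤ t)
    (hB : 1 ≤ B) (hBM : B ≤ M) : h * (exp (-(2 * M)) * stdSurv M) ≤ survWeight h t B := by
  have hst : 1 ≤ √t := Real.one_le_sqrt.2 ht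
  have hexp : exp (-(2 * M)) ≤ exp (-(2 * h * B)) := exp_le_exp.2 (by nlinarith)
  have hsurv : stdSurv M ≤ stdSurv (B / √t - h * √t) := by
    refine stdSurv_antitone ?_
    have : B / √t ≤ B := div_le_self (by linarith) hst
    nlinarith
  calc h * (exp (-(2 * M)) * stdSurv M) = h * 1 * exp (-(2 * M)) * stdSurv M := by ring
    _ ≤ survWeight h t B := by
      unfold survWeight
      gcongr
      exact (stdSurv_pos M).le

lemma integrable_survWeight_comp {α : Type*} [MeasurableSpace α] {μ : Measure α}
    [IsFiniteMeasure μ] {h : ℝ} (hh : 0 ≤ h) (t : ℝ) {f : α → ℝ} (hf : Measurable f)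
    (hf0 : ∀ z, 0 ≤ f z) :
    Integrable (fun z => survWeight h t (f z)) μ := by
  refine (integrable_const (exp (-1))).mono'
    ((measurable_survWeight h t).comp hf).aestronglyMeasurable (ae_of_all _ fun z => ?_)
  have hhf : 0 ≤ h * f z := mul_nonneg hh (hf0 z)
  rw [norm_of_nonneg (survWeight_nonneg hhf t)]
  exact survWeight_le hhf t

/-- Gaussian-averaged lower bound E[hB e^{−2hB} Φ̄(B/√t − h√t)] ≥ c·h. -/
theorem gaussian_lower_bound_minus (σ : ℝ) (hσ : 0 < σ) :
    ∃ c : ℝ, 0 < c ∧ ∀ h : ℝ, h ∈ Set.Ioc (0 : ℝ) 1 → ∀ t : ℝ, 1 ≤ t →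
      c * h ≤
        ∫ z, (h * (max (z + h) 0 / σ ^ 2) * Real.exp (-(2 * h * (max (z + h) 0 / σ ^ 2))) *
            stdSurv (max (z + h) 0 / σ ^ 2 / Real.sqrt t - h * Real.sqrt t))
          ∂(ProbabilityTheory.gaussianReal 0 (Real.toNNReal (σ ^ 2))) := by
  have hσ2 : 0 < σ ^ 2 := by positivity
  set μ := gaussianReal 0 (σ ^ 2).toNNReal
  set S := Set.Ioo (σ ^ 2) (2 * σ ^ 2)
  set M := 2 + (σ ^ 2)⁻¹
  have hμS : 0 < μ.real S :=
    gaussianReal_real_pos 0 (by simpa using hσ.ne')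
      (by simp only [S, Real.volume_Ioo, ne_eq, ENNReal.ofReal_eq_zero, not_le]; linarith)
  refine ⟨exp (-(2 * M)) * stdSurv M * μ.real S, by have := stdSurv_pos M; positivity, ?_⟩
  rintro h ⟨hh0, hh1⟩ t ht
  set B := fun z => max (z + h) 0 / σ ^ 2
  have hB_mem : ∀ z ∈ S, 1 ≤ B z ∧ B z ≤ M := by
    rintro z ⟨hz1, hz2⟩
    have hmax : max (z + h) 0 = z + h := max_eq_left (by linarith)
    simp only [B, hmax, M, le_div_iff₀ hσ2, div_le_iff₀ hσ2, add_mul, inv_mul_cancel₀ hσ2.ne']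
    constructor <;> linarith
  have hB_nonneg : ∀ z, 0 ≤ B z := fun z => div_nonneg (le_max_right _ _) hσ2.le
  have hBm : Measurable B := by fun_prop
  change _ ≤ ∫ z, survWeight h t (B z) ∂μ
  calc exp (-(2 * M)) * stdSurv M * μ.real S * h
      = h * (exp (-(2 * M)) * stdSurv M) * μ.real S := by ring
    _ ≤ ∫ z in S, survWeight h t (B z) ∂μ :=
      setIntegral_ge_of_const_le_real measurableSet_Ioo (measure_ne_top _ _)
        (fun z hz =>
          mul_exp_mul_stdSurv_le_survWeight hh0.le hh1 ht (hB_mem z hz).1 (hB_mem z hz).2)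
        (integrable_survWeight_comp hh0.le t hBm hB_nonneg).integrableOn
    _ ≤ ∫ z, survWeight h t (B z) ∂μ :=
      setIntegral_le_integral (integrable_survWeight_comp hh0.le t hBm hB_nonneg)
        (ae_of_all _ fun z => survWeight_nonneg (mul_nonneg hh0.le (hB_nonneg z)) t)
end
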